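/- arXiv:1004.1740 — 2 statements merged into one kernel-verified Lean document; each statement's English description precedes it below -/
import Mathlib

section
/- For every positive integer n, M(2n+1) ≥ 2·M(n)·M(n+1). -/
/-!
If `σ` and `τ` are 3AP-free arrangements of `1, …, n` and `1, …, n + 1`, then `2σ` followed by
`2τ - 1`, and also `2τ - 1` followed by `2σ`, are 3AP-free arrangements of `1, …, 2n + 1`: an
affine image of a 3AP-free sequence is 3AP-free, and a 3AP meeting both blocks would have outer
terms of different parity. For `n > 0` the parity of the first entry tells the two orders apart,
so these `2 M(n) M(n + 1)` permutations are distinct.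
-/

/-- A finite sequence (list) of naturals contains a 3-term arithmetic progression
as a subsequence: there are indices `i < j < k` with `a i + a k = 2 * a j`,
equivalently some sublist `[x, y, z]` with `x + z = 2 * y`. -/
def Has3AP (l : List ℕ) : Prop :=
  ∃ x y z : ℕ, [x, y, z].Sublist l ∧ x + z = 2 * y

/-- `M n` is the number of 3AP-free permutations of `{1, 2, ..., n}`. -/
noncomputable def M (n : ℕ) : ℕ :=
  Nat.card {l : List ℕ // l.Perm (List.range' 1 n) ∧ ¬ Has3AP l}

open List Function

theorem Has3AP.of_map {f : ℕ → ℕ} {l : List ℕ}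
    (hf : ∀ x ∈ l, ∀ y ∈ l, ∀ z ∈ l, f x + f z = 2 * f y → x + z = 2 * y)
    (h : Has3AP (l.map f)) : Has3AP l := by
  obtain ⟨_, _, _, hs, he⟩ := h
  obtain ⟨l', hl', heq⟩ := sublist_map_iff.1 hs
  rcases l' with _ | ⟨x, _ | ⟨y, _ | ⟨z, _ | _⟩⟩⟩ <;>
    simp only [map_cons, map_nil, cons.injEq, reduceCtorEq, and_false, and_true] at heq
  obtain ⟨rfl, rfl, rfl⟩ := heq
  have hmem : ∀ w ∈ [x, y, z], w ∈ l := fun _ hw => hl'.subset hw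
  exact ⟨x, y, z, hl', hf x (hmem x (by simp)) y (hmem y (by simp)) z (hmem z (by simp)) he⟩

/-- The outer terms of a 3AP have the same parity, so no 3AP starts in `u` and ends in `v`. -/
theorem Has3AP.of_append {u v : List ℕ} (huv : ∀ x ∈ u, ∀ z ∈ v, x % 2 ≠ z % 2)
    (h : Has3AP (u ++ v)) : Has3AP u ∨ Has3AP v := by
  obtain ⟨x, y, z, hs, he⟩ := h
  obtain ⟨s, t, hst, hs, ht⟩ := sublist_append_iff.1 hs
  have straddle : x ∈ s → z ∈ t → False := fun hx hz =>
    huv x (hs.subset hx) z (ht.subset hz) (by omega)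
  rcases s with _ | ⟨a, _ | ⟨b, _ | ⟨c, _ | ⟨d, s⟩⟩⟩⟩ <;>
    simp only [nil_append, cons_append, cons.injEq] at hst
  · exact .inr ⟨x, y, z, hst ▸ ht, he⟩
  · obtain ⟨rfl, rfl⟩ := hst
    exact (straddle (by simp) (by simp)).elim
  · obtain ⟨rfl, rfl, rfl⟩ := hst
    exact (straddle (by simp) (by simp)).elim
  · obtain ⟨rfl, rfl, rfl, rfl⟩ := hst
    exact .inl ⟨x, y, z, by simpa using hs, he⟩
  · simp at hst

theorem perm_range'_two_mul_add_one (n : ℕ) :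
    (range' 1 n).map (2 * ·) ++ (range' 1 (n + 1)).map (2 * · - 1) ~ range' 1 (2 * n + 1) := by
  refine (perm_ext_iff_of_nodup ?_ nodup_range').2 fun x => ?_
  · refine ((nodup_range' (s := 1)).map_on ?_).append ((nodup_range' (s := 1)).map_on ?_) ?_
    · intro x _ y _ h; omega
    · intro x hx y hy h
      simp only [mem_range'_1] at hx hy
      omega
    · simp only [List.disjoint_left, mem_map, mem_range'_1]
      rintro _ ⟨a, -, rfl⟩ ⟨b, hb, h⟩
      omega
  · simp only [mem_append, mem_map, mem_range'_1]
    constructor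
    · rintro (⟨k, hk, rfl⟩ | ⟨k, hk, rfl⟩) <;> omega
    · intro hx
      rcases Nat.even_or_odd' x with ⟨k, rfl | rfl⟩
      · exact .inl ⟨k, by omega, rfl⟩
      · exact .inr ⟨k + 1, by omega, by omega⟩

theorem pos_of_perm_range' {n : ℕ} {l : List ℕ} (h : l ~ range' 1 n) : ∀ k ∈ l, 0 < k :=
  fun _ hk => (mem_range'_1.1 (h.subset hk)).1

def evenOddAppend : Bool → List ℕ → List ℕ → List ℕ
  | false, a, b => a.map (2 * ·) ++ b.map (2 * · - 1)
  | true, a, b => b.map (2 * · - 1) ++ a.map (2 * ·)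

theorem evenOddAppend_perm {n : ℕ} {a b : List ℕ} (ha : a ~ range' 1 n)
    (hb : b ~ range' 1 (n + 1)) (c : Bool) : evenOddAppend c a b ~ range' 1 (2 * n + 1) := by
  have h := ((ha.map _).append (hb.map _)).trans (perm_range'_two_mul_add_one n)
  cases c
  · exact h
  · exact perm_append_comm.trans h

theorem not_has3AP_evenOddAppend {a b : List ℕ} (hb : ∀ k ∈ b, 0 < k) (ha3 : ¬Has3AP a)
    (hb3 : ¬Has3AP b) (c : Bool) : ¬Has3AP (evenOddAppend c a b) := by
  have hev : ¬Has3AP (a.map (2 * ·)) := fun h =>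
    ha3 (h.of_map fun x _ y _ z _ h => by omega)
  have hodd : ¬Has3AP (b.map (2 * · - 1)) := fun h =>
    hb3 (h.of_map fun x hx y hy z hz h => by
      have := hb x hx; have := hb y hy; have := hb z hz; omega)
  have hpar : ∀ x ∈ a.map (2 * ·), ∀ z ∈ b.map (2 * · - 1), x % 2 ≠ z % 2 := by
    simp only [mem_map]
    rintro _ ⟨x, -, rfl⟩ _ ⟨z, hz, rfl⟩
    have := hb z hz
    omega
  cases c
  · exact fun h => (h.of_append hpar).elim hev hodd
  · exact fun h => (h.of_append fun z hz x hx => (hpar x hx z hz).symm).elim hodd hev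

theorem head?_evenOddAppend {a b : List ℕ} (ha : a ≠ []) (hb : b ≠ []) (hpos : ∀ k ∈ b, 0 < k)
    (c : Bool) : (evenOddAppend c a b).head?.map (· % 2) = some c.toNat := by
  obtain ⟨x, a, rfl⟩ := exists_cons_of_ne_nil ha
  obtain ⟨y, b, rfl⟩ := exists_cons_of_ne_nil hb
  have := hpos y mem_cons_self
  cases c <;> simp [evenOddAppend]
  omega

theorem evenOddAppend_inj {c : Bool} {a₁ a₂ b₁ b₂ : List ℕ} (ha : a₁.length = a₂.length)
    (h : evenOddAppend c a₁ b₁ = evenOddAppend c a₂ b₂) : a₁ = a₂ ∧ b₁ = b₂ := by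
  have hmul : Injective (2 * · : ℕ → ℕ) := fun x y (h : 2 * x = 2 * y) => by omega
  have hodd : Injective (2 * · - 1 : ℕ → ℕ) := fun x y (h : 2 * x - 1 = 2 * y - 1) => by omega
  cases c
  · obtain ⟨h₁, h₂⟩ := append_inj h (by simpa using ha)
    exact ⟨map_injective_iff.2 hmul h₁, map_injective_iff.2 hodd h₂⟩
  · obtain ⟨h₁, h₂⟩ := append_inj' h (by simpa using ha)
    exact ⟨map_injective_iff.2 hmul h₂, map_injective_iff.2 hodd h₁⟩

abbrev APFreePerm (n : ℕ) : Type := {l : List ℕ // l.Perm (range' 1 n) ∧ ¬Has3AP l}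

instance (n : ℕ) : Finite (APFreePerm n) :=
  ((range' 1 n).permutations.finite_toSet.subset fun _ hl => mem_permutations.2 hl.1).to_subtype

def APFreePerm.evenOddAppend (n : ℕ) (p : Bool × APFreePerm n × APFreePerm (n + 1)) :
    APFreePerm (2 * n + 1) :=
  let ⟨c, ⟨a, ha, ha3⟩, ⟨b, hb, hb3⟩⟩ := p
  ⟨_root_.evenOddAppend c a b, evenOddAppend_perm ha hb c,
    not_has3AP_evenOddAppend (pos_of_perm_range' hb) ha3 hb3 c⟩

theorem APFreePerm.evenOddAppend_injective {n : ℕ} (hn : 0 < n) :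
    Injective (APFreePerm.evenOddAppend n) := by
  rintro ⟨c₁, ⟨a₁, ha₁, _⟩, ⟨b₁, hb₁, _⟩⟩ ⟨c₂, ⟨a₂, ha₂, _⟩, ⟨b₂, hb₂, _⟩⟩ heq
  have h : _root_.evenOddAppend c₁ a₁ b₁ = _root_.evenOddAppend c₂ a₂ b₂ :=
    congrArg Subtype.val heq
  have ne_nil {m : ℕ} {l : List ℕ} (hl : l ~ range' 1 m) (hm : 0 < m) : l ≠ [] :=
    ne_nil_of_length_pos (by simpa [hl.length_eq] using hm)
  have head {a b : List ℕ} (ha : a ~ range' 1 n) (hb : b ~ range' 1 (n + 1)) (c : Bool) :=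
    head?_evenOddAppend (ne_nil ha hn) (ne_nil hb n.succ_pos) (pos_of_perm_range' hb) c
  have hc : c₁ = c₂ := by
    have := (head ha₁ hb₁ c₁).symm.trans (h ▸ head ha₂ hb₂ c₂)
    cases c₁ <;> cases c₂ <;> simp_all
  subst hc
  obtain ⟨rfl, rfl⟩ := evenOddAppend_inj (by simp [ha₁.length_eq, ha₂.length_eq]) h
  rfl

/-- For every positive integer `n`, `M (2n+1) ≥ 2 * M n * M (n+1)`. -/
theorem M_two_mul_add_one (n : ℕ) (hn : 0 < n) :
    2 * M n * M (n + 1) ≤ M (2 * n + 1) := by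
  calc 2 * M n * M (n + 1) = Nat.card (Bool × APFreePerm n × APFreePerm (n + 1)) := by
        simp only [Nat.card_prod, Nat.card_eq_fintype_card, Fintype.card_bool, M, mul_assoc]
    _ ≤ M (2 * n + 1) := Nat.card_le_card_of_injective _ (APFreePerm.evenOddAppend_injective hn)
end

section
/- For every ε > 0 there exists a 4-free set S of positive integers whose upper density is greater than 1 − ε. Consequently α(4) = sup{upper density of S : S is 4-free} = 1. -/
open Filter

/-- `f : ℕ → ℕ` is a (bijective) enumeration of the set `S`. -/
def IsPermOf (f : ℕ → ℕ) (S : Set ℕ) : Prop :=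
  Function.Injective f ∧ Set.range f = S

/-- A set `S` of naturals is 4-free if some enumeration of `S` contains no
4-term arithmetic progression (with nonzero, possibly negative, common
difference) as a subsequence. -/
def FourFree (S : Set ℕ) : Prop :=
  ∃ f : ℕ → ℕ, IsPermOf f S ∧
    ¬ ∃ i₁ i₂ i₃ i₄ : ℕ, i₁ < i₂ ∧ i₂ < i₃ ∧ i₃ < i₄ ∧
      ((f i₂ : ℤ) - (f i₁ : ℤ) = (f i₃ : ℤ) - (f i₂ : ℤ)) ∧
      ((f i₃ : ℤ) - (f i₂ : ℤ) = (f i₄ : ℤ) - (f i₃ : ℤ)) ∧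
      f i₁ ≠ f i₂

/-- The upper density `limsup |S ∩ [1, n]| / n` of a set of naturals. -/
noncomputable def upperDensity (S : Set ℕ) : ℝ :=
  limsup (fun n : ℕ => (Nat.card ↥(S ∩ Set.Icc 1 n) : ℝ) / n) atTop

/-!
Take the blocks `[c_k, c_k + 2^{m_k})` with `c_0 = 1`, `m_k = (k + 1) c_k` and
`c_{k+1} = 2 (c_k + 2^{m_k})` (`blockBase`, `blockExp`), let `S` be their union, and list `S`
block after block, each block in bit-reversed order. Bit reversal puts no 3-term progression of
`[0, 2^m)` in order: the outer terms of a progression have equal parity, while the leading bit of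
the position, which becomes the parity of the value, is monotone along the list. A 4-term
progression in the listing cannot leave a block after its second term, since the next term would
be more than twice the previous one; so its last three terms lie in one block, which is
impossible. Finally the block `[c_k, c_k + 2^{m_k})` covers more than a fraction `k / (k + 1)` of
`[1, c_k + 2^{m_k}]`.
-/

open Topology

def bitRev : ℕ → ℕ → ℕ
  | 0, _ => 0
  | m + 1, p => 2 * bitRev m (p % 2 ^ m) + p / 2 ^ m

lemma bitRev_lt {m p : ℕ} (hp : p < 2 ^ m) : bitRev m p < 2 ^ m := by
  induction m generalizing p with
  | zero => simp [bitRev]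
  | succ m ih =>
    have hlow := ih (Nat.mod_lt p (by positivity : 0 < 2 ^ m))
    have htop : p / 2 ^ m < 2 := Nat.div_lt_of_lt_mul (by rwa [← pow_succ])
    rw [bitRev, pow_succ]
    omega

lemma bitRev_injOn (m : ℕ) : (Set.Iio (2 ^ m)).InjOn (bitRev m) := by
  induction m with
  | zero => intro p hp q hq _; simp_all
  | succ m ih =>
    intro p hp q hq h
    rw [Set.mem_Iio, pow_succ] at hp hq
    have hp₂ : p / 2 ^ m < 2 := Nat.div_lt_of_lt_mul hp
    have hq₂ : q / 2 ^ m < 2 := Nat.div_lt_of_lt_mul hq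
    have hp₁ := Nat.div_add_mod p (2 ^ m)
    have hq₁ := Nat.div_add_mod q (2 ^ m)
    simp only [bitRev] at h
    generalize p / 2 ^ m = s at *
    generalize q / 2 ^ m = t at *
    obtain rfl : s = t := by omega
    have := ih (Nat.mod_lt p (by positivity)) (Nat.mod_lt q (by positivity)) (by omega)
    omega

lemma bitRev_bijOn (m : ℕ) : Set.BijOn (bitRev m) (Set.Iio (2 ^ m)) (Set.Iio (2 ^ m)) :=
  ((Set.finite_Iio _).injOn_iff_bijOn_of_mapsTo fun _ => bitRev_lt).mp (bitRev_injOn m)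

theorem bitRev_eq_of_ap {m p₁ p₂ p₃ : ℕ} (h₁₂ : p₁ < p₂) (h₂₃ : p₂ < p₃) (h₃ : p₃ < 2 ^ m)
    (hap : (bitRev m p₂ : ℤ) - bitRev m p₁ = (bitRev m p₃ : ℤ) - bitRev m p₂) :
    bitRev m p₁ = bitRev m p₂ := by
  induction m generalizing p₁ p₂ p₃ with
  | zero => rfl
  | succ m ih =>
    have htop₃ : p₃ / 2 ^ m < 2 := Nat.div_lt_of_lt_mul (by rwa [← pow_succ])
    have hmono₁₂ := Nat.div_le_div_right (c := 2 ^ m) h₁₂.le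
    have hmono₂₃ := Nat.div_le_div_right (c := 2 ^ m) h₂₃.le
    have e₁ := Nat.div_add_mod p₁ (2 ^ m)
    have e₂ := Nat.div_add_mod p₂ (2 ^ m)
    have e₃ := Nat.div_add_mod p₃ (2 ^ m)
    simp only [bitRev] at hap ⊢
    generalize p₁ / 2 ^ m = t₁ at *
    generalize p₂ / 2 ^ m = t₂ at *
    generalize p₃ / 2 ^ m = t₃ at *
    -- the outer values of a progression have equal parity, i.e. equal leading bits
    obtain rfl : t₁ = t₃ := by omega
    obtain rfl : t₁ = t₂ := by omega
    have := ih (p₁ := p₁ % 2 ^ m) (p₂ := p₂ % 2 ^ m) (p₃ := p₃ % 2 ^ m) (by omega)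
      (by omega) (Nat.mod_lt _ (by positivity)) (by omega)
    omega

section Blocks

variable (L : ℕ → ℕ)

def blockStart (k : ℕ) : ℕ := ∑ j ∈ Finset.range k, L j

def blockIndex (n : ℕ) : ℕ := Nat.findGreatest (fun k => blockStart L k ≤ n) n

lemma blockStart_succ (k : ℕ) : blockStart L (k + 1) = blockStart L k + L k :=
  Finset.sum_range_succ L k

lemma blockStart_blockIndex_le (n : ℕ) : blockStart L (blockIndex L n) ≤ n :=
  Nat.findGreatest_spec (P := fun k => blockStart L k ≤ n) (Nat.zero_le n) (by simp [blockStart])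

variable {L}

lemma strictMono_blockStart (hL : ∀ k, 0 < L k) : StrictMono (blockStart L) :=
  strictMono_nat_of_lt_succ fun k => by rw [blockStart_succ]; exact Nat.lt_add_of_pos_right (hL k)

lemma lt_blockStart_blockIndex_succ (hL : ∀ k, 0 < L k) (n : ℕ) :
    n < blockStart L (blockIndex L n + 1) := by
  by_contra! h
  have hle : blockIndex L n + 1 ≤ n := ((strictMono_blockStart hL).id_le _).trans h
  exact Nat.findGreatest_is_greatest (Nat.lt_succ_self _) hle h

lemma sub_blockStart_blockIndex_lt (hL : ∀ k, 0 < L k) (n : ℕ) :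
    n - blockStart L (blockIndex L n) < L (blockIndex L n) := by
  have := blockStart_blockIndex_le L n
  have := lt_blockStart_blockIndex_succ hL n
  rw [blockStart_succ] at this
  omega

lemma blockIndex_eq (hL : ∀ k, 0 < L k) {k n : ℕ} (h₁ : blockStart L k ≤ n)
    (h₂ : n < blockStart L (k + 1)) : blockIndex L n = k := by
  rw [blockIndex, Nat.findGreatest_eq_iff]
  refine ⟨((strictMono_blockStart hL).id_le k).trans h₁, fun _ => h₁, fun j hj _ hle => ?_⟩
  have : blockStart L (k + 1) ≤ blockStart L j := (strictMono_blockStart hL).monotone hj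
  omega

lemma monotone_blockIndex (hL : ∀ k, 0 < L k) : Monotone (blockIndex L) := by
  intro i j hij
  by_contra! h
  have : blockStart L (blockIndex L j + 1) ≤ blockStart L (blockIndex L i) :=
    (strictMono_blockStart hL).monotone h
  have := lt_blockStart_blockIndex_succ hL j
  have := blockStart_blockIndex_le L i
  omega

end Blocks

theorem not_exists_fourAP_of_blocks {f b : ℕ → ℕ} (hb : Monotone b)
    (hsep : ∀ i j, b i < b j → 2 * f i < f j)
    (hblock : ∀ i j l, i < j → j < l → b i = b l →
      (f j : ℤ) - f i = (f l : ℤ) - f j → f i = f j) :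
    ¬ ∃ i₁ i₂ i₃ i₄ : ℕ, i₁ < i₂ ∧ i₂ < i₃ ∧ i₃ < i₄ ∧
      ((f i₂ : ℤ) - (f i₁ : ℤ) = (f i₃ : ℤ) - (f i₂ : ℤ)) ∧
      ((f i₃ : ℤ) - (f i₂ : ℤ) = (f i₄ : ℤ) - (f i₃ : ℤ)) ∧
      f i₁ ≠ f i₂ := by
  rintro ⟨i₁, i₂, i₃, i₄, h₁₂, h₂₃, h₃₄, hap₁, hap₂, hne⟩
  have hb₂₃ : b i₂ = b i₃ := by
    by_contra h
    have := hsep i₂ i₃ ((hb h₂₃.le).lt_of_ne h)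
    omega
  have hb₃₄ : b i₃ = b i₄ := by
    by_contra h
    have := hsep i₃ i₄ ((hb h₃₄.le).lt_of_ne h)
    omega
  have := hblock i₂ i₃ i₄ h₂₃ h₃₄ (hb₂₃.trans hb₃₄) hap₂
  omega

lemma card_inter_Icc_div_le_one (S : Set ℕ) (n : ℕ) :
    (Nat.card ↥(S ∩ Set.Icc 1 n) : ℝ) / n ≤ 1 := by
  have hcard : Nat.card ↥(S ∩ Set.Icc 1 n) ≤ n := by
    simpa using Nat.card_mono (Set.finite_Icc 1 n) Set.inter_subset_right
  exact div_le_one_of_le₀ (by exact_mod_cast hcard) n.cast_nonneg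

lemma upperDensity_le_one (S : Set ℕ) : upperDensity S ≤ 1 :=
  limsup_le_of_le (isCoboundedUnder_le_of_le atTop fun _ => by positivity)
    (Eventually.of_forall (card_inter_Icc_div_le_one S))

lemma one_sub_div_le_card_inter_Icc_div {S : Set ℕ} {a b : ℕ} (ha : 0 < a)
    (hS : Set.Ico a b ⊆ S) (hb : 0 < b) :
    1 - (a : ℝ) / b ≤ (Nat.card ↥(S ∩ Set.Icc 1 b) : ℝ) / b := by
  have hsub : Set.Ico a b ⊆ S ∩ Set.Icc 1 b := fun v hv =>
    ⟨hS hv, Set.mem_Icc.mpr ⟨by simp at hv; omega, by simp at hv; omega⟩⟩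
  have hcard : b ≤ Nat.card ↥(S ∩ Set.Icc 1 b) + a := by
    have := Nat.card_mono ((Set.finite_Icc 1 b).subset Set.inter_subset_right) hsub
    simp only [Nat.card_coe_set_eq, Set.ncard_Ico_nat] at this ⊢
    omega
  have hcardR : (b : ℝ) ≤ Nat.card ↥(S ∩ Set.Icc 1 b) + a := by exact_mod_cast hcard
  rw [sub_le_iff_le_add, ← add_div, le_div_iff₀ (by exact_mod_cast hb)]
  linarith

lemma upperDensity_eq_one_of_Ico_subset {S : Set ℕ} {a b : ℕ → ℕ} (ha : ∀ k, 0 < a k)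
    (hS : ∀ k, Set.Ico (a k) (b k) ⊆ S) (hb : Tendsto b atTop atTop)
    (hab : Tendsto (fun k => (a k : ℝ) / b k) atTop (𝓝 0)) : upperDensity S = 1 := by
  refine le_antisymm (upperDensity_le_one S) (le_of_forall_lt_imp_le_of_dense fun r hr => ?_)
  refine le_limsup_of_frequently_le ?_ (isBoundedUnder_of ⟨1, card_inter_Icc_div_le_one S⟩)
  have hev : ∀ᶠ k in atTop, r ≤ (Nat.card ↥(S ∩ Set.Icc 1 (b k)) : ℝ) / b k := by
    filter_upwards [hab.eventually (gt_mem_nhds (sub_pos.2 hr)), hb.eventually_gt_atTop 0]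
      with k hk hbk
    linarith [one_sub_div_le_card_inter_Icc_div (ha k) (hS k) hbk]
  exact hb.frequently hev.frequently

def blockBase : ℕ → ℕ
  | 0 => 1
  | k + 1 => 2 * (blockBase k + 2 ^ ((k + 1) * blockBase k))

def blockExp (k : ℕ) : ℕ := (k + 1) * blockBase k

def blockLen (k : ℕ) : ℕ := 2 ^ blockExp k

def fourFreeSet : Set ℕ := ⋃ k, Set.Ico (blockBase k) (blockBase k + blockLen k)

def fourFreeEnum (n : ℕ) : ℕ :=
  blockBase (blockIndex blockLen n) +
    bitRev (blockExp (blockIndex blockLen n)) (n - blockStart blockLen (blockIndex blockLen n))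

lemma blockBase_succ (k : ℕ) : blockBase (k + 1) = 2 * (blockBase k + blockLen k) := rfl

lemma blockBase_pos : ∀ k, 0 < blockBase k
  | 0 => Nat.one_pos
  | k + 1 => by rw [blockBase_succ]; have := blockBase_pos k; omega

lemma monotone_blockBase : Monotone blockBase :=
  monotone_nat_of_le_succ fun k => by rw [blockBase_succ]; omega

lemma blockLen_pos (k : ℕ) : 0 < blockLen k := Nat.two_pow_pos _

lemma fourFreeEnum_of_blockIndex_eq {n k : ℕ} (h : blockIndex blockLen n = k) :
    fourFreeEnum n = blockBase k + bitRev (blockExp k) (n - blockStart blockLen k) := by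
  subst h; rfl

lemma fourFreeEnum_mem (n : ℕ) : fourFreeEnum n ∈
    Set.Ico (blockBase (blockIndex blockLen n)) (blockBase (blockIndex blockLen n) +
      blockLen (blockIndex blockLen n)) := by
  have := bitRev_lt (sub_blockStart_blockIndex_lt blockLen_pos n)
  rw [Set.mem_Ico, fourFreeEnum]
  exact ⟨Nat.le_add_right _ _, Nat.add_lt_add_left this _⟩

lemma two_mul_fourFreeEnum_lt {i j : ℕ} (h : blockIndex blockLen i < blockIndex blockLen j) :
    2 * fourFreeEnum i < fourFreeEnum j := by
  have hi := (fourFreeEnum_mem i).2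
  have hj := (fourFreeEnum_mem j).1
  have := monotone_blockBase (Nat.succ_le_of_lt h)
  rw [blockBase_succ] at this
  omega

lemma fourFreeEnum_eq_of_ap {i j l : ℕ} (hij : i < j) (hjl : j < l)
    (hb : blockIndex blockLen i = blockIndex blockLen l)
    (hap : (fourFreeEnum j : ℤ) - fourFreeEnum i = (fourFreeEnum l : ℤ) - fourFreeEnum j) :
    fourFreeEnum i = fourFreeEnum j := by
  obtain ⟨k, hk⟩ : ∃ k, blockIndex blockLen i = k := ⟨_, rfl⟩
  have hl : blockIndex blockLen l = k := hb ▸ hk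
  have hj : blockIndex blockLen j = k := le_antisymm
    (hl ▸ monotone_blockIndex blockLen_pos hjl.le) (hk ▸ monotone_blockIndex blockLen_pos hij.le)
  have hstart : blockStart blockLen k ≤ i := hk ▸ blockStart_blockIndex_le blockLen i
  have hlt : l - blockStart blockLen k < 2 ^ blockExp k :=
    hl ▸ sub_blockStart_blockIndex_lt blockLen_pos l
  simp only [fourFreeEnum_of_blockIndex_eq hk, fourFreeEnum_of_blockIndex_eq hj,
    fourFreeEnum_of_blockIndex_eq hl] at hap ⊢
  push_cast at hap
  rw [bitRev_eq_of_ap (p₂ := j - blockStart blockLen k) (by omega) (by omega) hlt (by linarith)]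

lemma fourFreeEnum_injective : Function.Injective fourFreeEnum := by
  intro i j h
  have hb : blockIndex blockLen i = blockIndex blockLen j := by
    by_contra hne
    rcases lt_or_gt_of_ne hne with hlt | hlt <;>
      have := two_mul_fourFreeEnum_lt hlt <;> omega
  have hi := sub_blockStart_blockIndex_lt blockLen_pos i
  have hj := sub_blockStart_blockIndex_lt blockLen_pos j
  have hsi := blockStart_blockIndex_le blockLen i
  have hsj := blockStart_blockIndex_le blockLen j
  rw [hb] at hi hsi
  rw [fourFreeEnum, fourFreeEnum, hb, Nat.add_left_cancel_iff] at h
  have := bitRev_injOn _ hi hj h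
  omega

lemma range_fourFreeEnum : Set.range fourFreeEnum = fourFreeSet := by
  refine Set.Subset.antisymm ?_ fun v hv => ?_
  · rintro _ ⟨n, rfl⟩
    exact Set.mem_iUnion.mpr ⟨_, fourFreeEnum_mem n⟩
  obtain ⟨k, hk⟩ := Set.mem_iUnion.mp hv
  rw [Set.mem_Ico] at hk
  obtain ⟨q, hq, hqv⟩ := (bitRev_bijOn (blockExp k)).surjOn
    (show v - blockBase k < 2 ^ blockExp k by rw [← blockLen]; omega)
  rw [Set.mem_Iio, ← blockLen] at hq
  have hidx : blockIndex blockLen (blockStart blockLen k + q) = k :=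
    blockIndex_eq blockLen_pos (Nat.le_add_right _ _) (by rw [blockStart_succ]; omega)
  refine ⟨blockStart blockLen k + q, ?_⟩
  rw [fourFreeEnum_of_blockIndex_eq hidx, Nat.add_sub_cancel_left, hqv]
  omega

theorem fourFree_fourFreeSet : FourFree fourFreeSet :=
  ⟨fourFreeEnum, ⟨fourFreeEnum_injective, range_fourFreeEnum⟩,
    not_exists_fourAP_of_blocks (monotone_blockIndex blockLen_pos)
      (fun _ _ => two_mul_fourFreeEnum_lt) (fun _ _ _ => fourFreeEnum_eq_of_ap)⟩

lemma zero_notMem_fourFreeSet : 0 ∉ fourFreeSet := by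
  simp only [fourFreeSet, Set.mem_iUnion, Set.mem_Ico, not_exists, not_and]
  intro k hk
  have := blockBase_pos k
  omega

lemma tendsto_blockBase_div : Tendsto (fun k => (blockBase k : ℝ) /
    ((blockBase k + blockLen k : ℕ) : ℝ)) atTop (𝓝 0) := by
  refine squeeze_zero (fun _ => by positivity) (fun k => ?_)
    tendsto_one_div_add_atTop_nhds_zero_nat
  have hlen : (k + 1) * blockBase k < blockLen k := Nat.lt_two_pow_self
  have hlenR : ((k : ℝ) + 1) * blockBase k ≤ blockLen k := by exact_mod_cast hlen.le
  have hbase : (0 : ℝ) < blockBase k := by exact_mod_cast blockBase_pos k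
  push_cast
  rw [div_le_div_iff₀ (by linarith [hlenR]) (by positivity)]
  nlinarith

lemma upperDensity_fourFreeSet : upperDensity fourFreeSet = 1 := by
  refine upperDensity_eq_one_of_Ico_subset blockBase_pos
    (fun k => Set.subset_iUnion (fun k => Set.Ico (blockBase k) (blockBase k + blockLen k)) k)
    (tendsto_atTop_mono (fun k => ?_) tendsto_id) tendsto_blockBase_div
  have : (k + 1) * blockBase k < blockLen k := Nat.lt_two_pow_self
  have := blockBase_pos k
  show k ≤ blockBase k + blockLen k
  nlinarith

/-- For every `ε > 0` there is a 4-free set of positive integers with upper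
density greater than `1 - ε`; consequently
`α(4) = sup {upper density of S : S 4-free} = 1`. -/
theorem alpha_four_eq_one :
    (∀ ε : ℝ, 0 < ε → ∃ S : Set ℕ, 0 ∉ S ∧ FourFree S ∧ 1 - ε < upperDensity S) ∧
    sSup {x : ℝ | ∃ S : Set ℕ, 0 ∉ S ∧ FourFree S ∧ upperDensity S = x} = 1 := by
  have hgreatest : IsGreatest {x : ℝ | ∃ S : Set ℕ, 0 ∉ S ∧ FourFree S ∧ upperDensity S = x} 1 :=
    ⟨⟨fourFreeSet, zero_notMem_fourFreeSet, fourFree_fourFreeSet, upperDensity_fourFreeSet⟩,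
      by rintro _ ⟨S, -, -, rfl⟩; exact upperDensity_le_one S⟩
  refine ⟨fun ε hε => ⟨fourFreeSet, zero_notMem_fourFreeSet, fourFree_fourFreeSet, ?_⟩,
    hgreatest.csSup_eq⟩
  rw [upperDensity_fourFreeSet]
  linarith
end
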